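/- Let d ≥ 2, λ > 0 and let k ≥ 1 be an integer. There exists a constant C_d > 0 depending only on d with the following property. Let g : (𝕋^d × ℝ^d)^{k+1} → ℝ be measurable and satisfy |g(Z_{k+1})| ≤ M exp(−λ H_{k+1}(V_{k+1})) for some M ≥ 0, where H_m(V_m) := (1/2) Σ_{i=1}^{m} |v_i|². Then for every Z_k = (x₁,v₁,…,x_k,v_k) ∈ (𝕋^d × ℝ^d)^k, the quantity (|C^0_{k,k+1}| g)(Z_k) := Σ_{i=1}^{k} ∫_{S^{d−1}} ∫_{ℝ^d} [ |g(…, x_i, v_i^*, …, x_i, v_{k+1}^*)| ((v_{k+1} − v_i)·ν)_+ + |g(…, x_i, v_i, …, x_i, v_{k+1})| ((v_{k+1} − v_i)·ν)_− ] dv_{k+1} dσ(ν), where v_i^* := v_i + (ν·(v_{k+1} − v_i)) ν and v_{k+1}^* := v_{k+1} − (ν·(v_{k+1} − v_i)) ν, satisfies (|C^0_{k,k+1}| g)(Z_k) ≤ C_d λ^{−d/2} ( k λ^{−1/2} + Σ_{i=1}^{k} |v_i| ) exp(−λ H_k(V_k)) M. -/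

import Mathlib

open MeasureTheory Real

noncomputable section

/-- The unit torus `(ℝ/ℤ)^d`. -/
abbrev Torus (d : ℕ) := Fin d → AddCircle (1 : ℝ)

/-- Euclidean space `ℝ^d` (velocity space). -/
abbrev Vel (d : ℕ) := EuclideanSpace ℝ (Fin d)

/-- Kinetic energy `H_m(V_m) = (1/2) ∑ |v_i|²` of a configuration `Z_m`. -/
noncomputable def kineticEnergy {d m : ℕ} (Z : Fin m → Torus d × Vel d) : ℝ :=
  (1 / 2) * ∑ i, ‖(Z i).2‖ ^ 2

/-- From `Z_k`, replace the velocity of the `i`-th particle by `w` and append a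
`(k+1)`-st particle at position `x_i` with velocity `v`:
this is the configuration `(…, x_i, w, …, x_i, v)`. -/
noncomputable def adjoin {d k : ℕ} (Z : Fin k → Torus d × Vel d) (i : Fin k)
    (w v : Vel d) : Fin (k + 1) → Torus d × Vel d :=
  Fin.snoc (Function.update Z i ((Z i).1, w)) ((Z i).1, v)

/-!
Write `v = v_i`. Collisions conserve energy, `|v*|² + |w*|² = |v|² + |w|²`, so both the gain and
the loss configuration have energy `H_k(V_k) + |w|²/2`, and the two terms of the integrand are
bounded together by `M e^{-λ H_k} e^{-λ|w|²/2} |(w - v)·ν| ≤ M e^{-λ H_k} e^{-λ|w|²/2} (|w| + |v|)`.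
Giving away half of the Gaussian, `|w| e^{-λ|w|²/4} ≤ 2 λ^{-1/2}`, leaves
`M e^{-λ H_k} (2 λ^{-1/2} + |v|) e^{-λ|w|²/4}`, whose integral over `w` is
`(4π)^{d/2} λ^{-d/2}` times the prefactor; the sphere has finite measure.
-/

lemma norm_sq_add_norm_sq_collision {E : Type*} [NormedAddCommGroup E] [InnerProductSpace ℝ E]
    (u w ν : E) (hν : ‖ν‖ = 1) :
    ‖u + inner ℝ ν (w - u) • ν‖ ^ 2 + ‖w - inner ℝ ν (w - u) • ν‖ ^ 2
      = ‖u‖ ^ 2 + ‖w‖ ^ 2 := by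
  rw [norm_add_sq_real, norm_sub_sq_real, real_inner_smul_right, real_inner_smul_right,
    norm_smul, hν, inner_sub_right, real_inner_comm ν u, real_inner_comm ν w]
  simp only [Real.norm_eq_abs, mul_one, sq_abs]
  ring

lemma abs_mul_max_add_abs_mul_max_neg_le {a b c : ℝ} (ha : |a| ≤ c) (hb : |b| ≤ c) (t : ℝ) :
    |a| * max t 0 + |b| * max (-t) 0 ≤ c * |t| := by
  rw [← max_zero_add_max_neg_zero_eq_abs_self t, mul_add]
  gcongr

lemma kineticEnergy_adjoin {d k : ℕ} (Z : Fin k → Torus d × Vel d) (i : Fin k) (w v : Vel d) :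
    kineticEnergy (adjoin Z i w v)
      = kineticEnergy Z - ‖(Z i).2‖ ^ 2 / 2 + ‖w‖ ^ 2 / 2 + ‖v‖ ^ 2 / 2 := by
  have hupdate : ∑ j, ‖(Function.update Z i ((Z i).1, w) j).2‖ ^ 2
      = ∑ j, Function.update (fun j => ‖(Z j).2‖ ^ 2) i (‖w‖ ^ 2) j :=
    Finset.sum_congr rfl fun j _ => by
      rcases eq_or_ne j i with rfl | h <;> simp [Function.update_of_ne, *]
  simp only [kineticEnergy, adjoin, Fin.sum_univ_castSucc, Fin.snoc_castSucc, Fin.snoc_last]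
  rw [hupdate, Finset.sum_update_of_mem (Finset.mem_univ i), Finset.sum_sdiff_eq_sub
    (Finset.singleton_subset_iff.mpr (Finset.mem_univ i)), Finset.sum_singleton]
  ring

lemma kineticEnergy_adjoin_collision {d k : ℕ} (Z : Fin k → Torus d × Vel d) (i : Fin k)
    {ν : Vel d} (hν : ‖ν‖ = 1) (w : Vel d) :
    kineticEnergy (adjoin Z i ((Z i).2 + inner ℝ ν (w - (Z i).2) • ν)
      (w - inner ℝ ν (w - (Z i).2) • ν)) = kineticEnergy Z + ‖w‖ ^ 2 / 2 := by
  have := norm_sq_add_norm_sq_collision (Z i).2 w ν hν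
  rw [kineticEnergy_adjoin]
  linarith

lemma kineticEnergy_adjoin_self {d k : ℕ} (Z : Fin k → Torus d × Vel d) (i : Fin k)
    (w : Vel d) : kineticEnergy (adjoin Z i (Z i).2 w) = kineticEnergy Z + ‖w‖ ^ 2 / 2 := by
  rw [kineticEnergy_adjoin]
  ring

lemma mul_exp_neg_sq_le_one (y : ℝ) : y * exp (-y ^ 2) ≤ 1 := by
  have hy : y ≤ exp (y ^ 2) := by nlinarith [add_one_le_exp (y ^ 2)]
  calc y * exp (-y ^ 2) ≤ exp (y ^ 2) * exp (-y ^ 2) := by gcongr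
    _ = 1 := by rw [← exp_add, add_neg_cancel, exp_zero]

lemma mul_exp_neg_div_four_mul_sq_le {lam : ℝ} (hlam : 0 < lam) (x : ℝ) :
    x * exp (-(lam / 4) * x ^ 2) ≤ 2 * lam ^ (-(1 : ℝ) / 2) := by
  have hs : 0 < √lam := sqrt_pos.mpr hlam
  have key := mul_exp_neg_sq_le_one (√lam * x / 2)
  have hsq : (√lam * x / 2) ^ 2 = lam / 4 * x ^ 2 := by
    rw [div_pow, mul_pow, sq_sqrt hlam.le]; ring
  have hrpow : lam ^ (-(1 : ℝ) / 2) = (√lam)⁻¹ := by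
    rw [sqrt_eq_rpow, ← rpow_neg hlam.le]; norm_num
  rw [hsq, ← neg_mul] at key
  calc x * exp (-(lam / 4) * x ^ 2)
      = 2 * (√lam)⁻¹ * (√lam * x / 2 * exp (-(lam / 4) * x ^ 2)) := by field_simp
    _ ≤ 2 * lam ^ (-(1 : ℝ) / 2) := by rw [hrpow]; nlinarith [inv_pos.mpr hs]

lemma add_mul_exp_neg_mul_half_sq_le {lam : ℝ} (hlam : 0 < lam) (x : ℝ) {r : ℝ} (hr : 0 ≤ r) :
    (x + r) * exp (-lam * (x ^ 2 / 2))
      ≤ (2 * lam ^ (-(1 : ℝ) / 2) + r) * exp (-(lam / 4) * x ^ 2) := by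
  set e := exp (-(lam / 4) * x ^ 2)
  have he : 0 < e := exp_pos _
  have he1 : e ≤ 1 := exp_le_one_iff.mpr (by nlinarith [sq_nonneg x])
  have hsplit : exp (-lam * (x ^ 2 / 2)) = e * e := by rw [← exp_add]; ring_nf
  have hx := mul_exp_neg_div_four_mul_sq_le hlam x
  rw [hsplit]
  nlinarith [mul_le_mul_of_nonneg_right hx he.le,
    mul_le_mul_of_nonneg_left he1 (mul_nonneg hr he.le)]

lemma integral_exp_neg_div_four_mul_sq_norm {d : ℕ} {lam : ℝ} (hlam : 0 < lam) :
    ∫ w : Vel d, exp (-(lam / 4) * ‖w‖ ^ 2) = (4 * π) ^ ((d : ℝ) / 2) * lam ^ (-(d : ℝ) / 2) := by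
  rw [GaussianFourier.integral_rexp_neg_mul_sq_norm (by positivity), finrank_euclideanSpace_fin,
    div_div_eq_mul_div, mul_comm π 4, div_rpow (by positivity) hlam.le, neg_div,
    rpow_neg hlam.le, div_eq_mul_inv]

/-- The integrand of `(|C⁰_{k,k+1}| g)(Z_k)` at impact direction `ν` and velocity `w = v_{k+1}`. -/
def collisionIntegrand {d k : ℕ} (g : (Fin (k + 1) → Torus d × Vel d) → ℝ)
    (Z : Fin k → Torus d × Vel d) (i : Fin k) (ν w : Vel d) : ℝ :=
  |g (adjoin Z i ((Z i).2 + inner ℝ ν (w - (Z i).2) • ν) (w - inner ℝ ν (w - (Z i).2) • ν))| *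
      max (inner ℝ (w - (Z i).2) ν) 0 +
    |g (adjoin Z i (Z i).2 w)| * max (-inner ℝ (w - (Z i).2) ν) 0

section CollisionIntegrand

variable {d k : ℕ} {lam M : ℝ} {g : (Fin (k + 1) → Torus d × Vel d) → ℝ}

lemma collisionIntegrand_nonneg (Z : Fin k → Torus d × Vel d) (i : Fin k) (ν w : Vel d) :
    0 ≤ collisionIntegrand g Z i ν w := by
  unfold collisionIntegrand
  positivity

lemma collisionIntegrand_le (hlam : 0 < lam) (hM : 0 ≤ M)
    (hg : ∀ Z, |g Z| ≤ M * exp (-lam * kineticEnergy Z)) (Z : Fin k → Torus d × Vel d)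
    (i : Fin k) {ν : Vel d} (hν : ‖ν‖ = 1) (w : Vel d) :
    collisionIntegrand g Z i ν w ≤ M * exp (-lam * kineticEnergy Z) *
      (2 * lam ^ (-(1 : ℝ) / 2) + ‖(Z i).2‖) * exp (-(lam / 4) * ‖w‖ ^ 2) := by
  have hgain := hg (adjoin Z i ((Z i).2 + inner ℝ ν (w - (Z i).2) • ν)
    (w - inner ℝ ν (w - (Z i).2) • ν))
  have hloss := hg (adjoin Z i (Z i).2 w)
  rw [kineticEnergy_adjoin_collision Z i hν] at hgain
  rw [kineticEnergy_adjoin_self] at hloss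
  have hinner : |inner ℝ (w - (Z i).2) ν| ≤ ‖w‖ + ‖(Z i).2‖ :=
    (abs_real_inner_le_norm _ _).trans (by rw [hν, mul_one]; exact norm_sub_le _ _)
  calc collisionIntegrand g Z i ν w
      ≤ M * exp (-lam * (kineticEnergy Z + ‖w‖ ^ 2 / 2)) * |inner ℝ (w - (Z i).2) ν| :=
        abs_mul_max_add_abs_mul_max_neg_le hgain hloss _
    _ ≤ M * exp (-lam * (kineticEnergy Z + ‖w‖ ^ 2 / 2)) * (‖w‖ + ‖(Z i).2‖) := by gcongr
    _ = M * exp (-lam * kineticEnergy Z) *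
          ((‖w‖ + ‖(Z i).2‖) * exp (-lam * (‖w‖ ^ 2 / 2))) := by
        rw [mul_add (-lam), exp_add]; ring
    _ ≤ _ := by
        rw [mul_assoc _ (_ + _)]
        exact mul_le_mul_of_nonneg_left
          (add_mul_exp_neg_mul_half_sq_le hlam _ (norm_nonneg _)) (by positivity)

lemma integral_collisionIntegrand_le (hlam : 0 < lam) (hM : 0 ≤ M)
    (hg : ∀ Z, |g Z| ≤ M * exp (-lam * kineticEnergy Z)) (Z : Fin k → Torus d × Vel d)
    (i : Fin k) {ν : Vel d} (hν : ‖ν‖ = 1) :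
    ∫ w, collisionIntegrand g Z i ν w ≤ M * exp (-lam * kineticEnergy Z) *
      (2 * lam ^ (-(1 : ℝ) / 2) + ‖(Z i).2‖) *
        ((4 * π) ^ ((d : ℝ) / 2) * lam ^ (-(d : ℝ) / 2)) := by
  have hgauss := integral_exp_neg_div_four_mul_sq_norm (d := d) hlam
  have hint : Integrable fun w : Vel d => exp (-(lam / 4) * ‖w‖ ^ 2) :=
    Integrable.of_integral_ne_zero (by rw [hgauss]; positivity)
  rw [← hgauss, ← integral_const_mul]
  exact integral_mono_of_nonneg (.of_forall (collisionIntegrand_nonneg Z i ν))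
    (hint.const_mul _) (.of_forall (collisionIntegrand_le hlam hM hg Z i hν))

lemma integral_sphere_collisionIntegrand_le (hlam : 0 < lam) (hM : 0 ≤ M)
    (hg : ∀ Z, |g Z| ≤ M * exp (-lam * kineticEnergy Z)) (Z : Fin k → Torus d × Vel d)
    (i : Fin k) (μ : Measure (Metric.sphere (0 : Vel d) 1)) [IsFiniteMeasure μ] :
    ∫ ν, (∫ w, collisionIntegrand g Z i ν w) ∂μ ≤
      μ.real Set.univ * (M * exp (-lam * kineticEnergy Z) *
        (2 * lam ^ (-(1 : ℝ) / 2) + ‖(Z i).2‖) *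
          ((4 * π) ^ ((d : ℝ) / 2) * lam ^ (-(d : ℝ) / 2))) := by
  rw [← smul_eq_mul, ← integral_const]
  exact integral_mono_of_nonneg
    (.of_forall fun ν => integral_nonneg (collisionIntegrand_nonneg Z i ν)) (integrable_const _)
    (.of_forall fun ν => integral_collisionIntegrand_le hlam hM hg Z i (norm_eq_of_mem_sphere ν))

end CollisionIntegrand

theorem boltzmann_collision_operator_continuity_general (d : ℕ) :
    ∃ C > (0:ℝ), ∀ lam : ℝ, 0 < lam → ∀ k : ℕ, 1 ≤ k →
      ∀ (g : (Fin (k + 1) → Torus d × Vel d) → ℝ) (M : ℝ), 0 ≤ M →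
      (∀ Z : Fin (k + 1) → Torus d × Vel d,
        |g Z| ≤ M * Real.exp (-lam * kineticEnergy Z)) →
      ∀ Z : Fin k → Torus d × Vel d,
        (∑ i : Fin k, ∫ ν : Metric.sphere (0 : Vel d) 1, (∫ w : Vel d,
            (|g (adjoin Z i
                  ((Z i).2 + (inner ℝ (ν : Vel d) (w - (Z i).2) : ℝ) • (ν : Vel d))
                  (w - (inner ℝ (ν : Vel d) (w - (Z i).2) : ℝ) • (ν : Vel d)))| *
                max ((inner ℝ (w - (Z i).2) (ν : Vel d) : ℝ)) 0 +
              |g (adjoin Z i ((Z i).2) w)| *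
                max (-(inner ℝ (w - (Z i).2) (ν : Vel d) : ℝ)) 0))
          ∂((volume : Measure (Vel d)).toSphere)) ≤
        C * lam ^ (-(d : ℝ) / 2) * ((k : ℝ) * lam ^ (-(1 : ℝ) / 2) + ∑ i, ‖(Z i).2‖) *
          Real.exp (-lam * kineticEnergy Z) * M := by
  set S := (volume : Measure (Vel d)).toSphere.real Set.univ
  have hS : 0 ≤ S := measureReal_nonneg
  refine ⟨2 * (S + 1) * (4 * π) ^ ((d : ℝ) / 2), by positivity, ?_⟩
  intro lam hlam k _ g M hM hg Z
  set L := lam ^ (-(1 : ℝ) / 2)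
  set X := M * exp (-lam * kineticEnergy Z) * ((4 * π) ^ ((d : ℝ) / 2) * lam ^ (-(d : ℝ) / 2))
  have hL : 0 ≤ L := by positivity
  have hX : 0 ≤ X := by positivity
  calc _ ≤ ∑ i, 2 * (S + 1) * X * (L + ‖(Z i).2‖) := Finset.sum_le_sum fun i _ => by
        have hv := norm_nonneg (Z i).2
        calc _ ≤ S * (X * (2 * L + ‖(Z i).2‖)) :=
              (integral_sphere_collisionIntegrand_le hlam hM hg Z i _).trans_eq (by ring)
          _ ≤ 2 * (S + 1) * X * (L + ‖(Z i).2‖) := by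
              nlinarith [mul_nonneg hS hX, mul_nonneg (mul_nonneg hS hX) hL]
    _ = _ := by
        rw [← Finset.mul_sum, Finset.sum_add_distrib, Finset.sum_const, Finset.card_univ,
          Fintype.card_fin, nsmul_eq_mul]
        ring

/-- Continuity estimate for the Boltzmann collision operator `|C⁰_{k,k+1}|`: if
`|g(Z_{k+1})| ≤ M exp(-λ H_{k+1})`, then
`(|C⁰_{k,k+1}| g)(Z_k) ≤ C_d λ^{-d/2} (k λ^{-1/2} + ∑ᵢ |vᵢ|) exp(-λ H_k) M`. -/
theorem boltzmann_collision_operator_continuity (d : ℕ) (hd : 2 ≤ d) :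
    ∃ C > (0:ℝ), ∀ lam : ℝ, 0 < lam → ∀ k : ℕ, 1 ≤ k →
      ∀ (g : (Fin (k + 1) → Torus d × Vel d) → ℝ) (M : ℝ), 0 ≤ M →
      (∀ Z : Fin (k + 1) → Torus d × Vel d,
        |g Z| ≤ M * Real.exp (-lam * kineticEnergy Z)) →
      ∀ Z : Fin k → Torus d × Vel d,
        (∑ i : Fin k, ∫ ν : Metric.sphere (0 : Vel d) 1, (∫ w : Vel d,
            (|g (adjoin Z i
                  ((Z i).2 + (inner ℝ (ν : Vel d) (w - (Z i).2) : ℝ) • (ν : Vel d))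
                  (w - (inner ℝ (ν : Vel d) (w - (Z i).2) : ℝ) • (ν : Vel d)))| *
                max ((inner ℝ (w - (Z i).2) (ν : Vel d) : ℝ)) 0 +
              |g (adjoin Z i ((Z i).2) w)| *
                max (-(inner ℝ (w - (Z i).2) (ν : Vel d) : ℝ)) 0))
          ∂((volume : Measure (Vel d)).toSphere)) ≤
        C * lam ^ (-(d : ℝ) / 2) * ((k : ℝ) * lam ^ (-(1 : ℝ) / 2) + ∑ i, ‖(Z i).2‖) *
          Real.exp (-lam * kineticEnergy Z) * M :=
  boltzmann_collision_operator_continuity_general d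

end
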